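/- arXiv:2008.04406 — 2 statements merged into one kernel-verified Lean document; each statement's English description precedes it below -/
import Mathlib

section
/- Let A be a complex symmetric N×N matrix, w ∈ ℂ^N with |w| = 1, k a positive integer, and let ψ_{A,w}(z) = e^{−k} e^{kQ_A(w)/2} e^{kQ_A(z)/2} e^{k z(w̄ᵀ − Awᵀ)} (the Gaussian coherent state restricted to |z| = 1). Then the Fourier coefficient (1/2π)∫₀^{2π} e^{−ikt} ψ_{A,w}(e^{it}z) dt equals e^{−k} e^{kQ_A(w)/2} ∑_{⌈k/2⌉ ≤ ℓ ≤ k} [kˡ / ((k−ℓ)!(2ℓ−k)!)] (Q_A(z)/2)^{k−ℓ} (z(w̄ᵀ − Awᵀ))^{2ℓ−k}. -/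
/-!
Write `e = e^{it}`, `u = k Q_A(z)/2` and `v = k z(w̄ᵀ − Awᵀ)`, so that
`ψ_{A,w}(e^{it} z) = C e^{u e²} e^{v e}` with `C = e^{−k} e^{k Q_A(w)/2}`.
Expanding both exponentials gives an absolutely convergent trigonometric series whose
`(a, b)`-term `C uᵃ vᵇ / (a! b!)` has frequency `2a + b`. Integrating term by term against
`e^{−ikt}`, orthogonality of characters keeps exactly the terms with `2a + b = k`, that is
`a = k − ℓ`, `b = 2ℓ − k` with `k ≤ 2ℓ ≤ 2k`, and `k^a k^b = k^ℓ`.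
-/

open scoped BigOperators Real
open Matrix
open scoped ComplexOrder

/-- `Q_A(z) = z A zᵀ`. -/
noncomputable def quadForm {N : ℕ} (A : Matrix (Fin N) (Fin N) ℂ) (z : Fin N → ℂ) : ℂ :=
  ∑ i, ∑ j, z i * A i j * z j

/-- Hermitian pairing `z w̄ᵀ`. -/
noncomputable def dotc {N : ℕ} (z w : Fin N → ℂ) : ℂ :=
  ∑ j, z j * (starRingEnd ℂ) (w j)

/-- `|z|²`. -/
noncomputable def nsq {N : ℕ} (z : Fin N → ℂ) : ℝ :=
  ∑ j, Complex.normSq (z j)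

/-- The rewritten Gaussian coherent state
`ψ_{A,w}(z) = e^{−k} e^{kQ_A(w)/2} e^{kQ_A(z)/2} e^{k z(w̄ᵀ − Awᵀ)}` (valid on `|z|=1`). -/
noncomputable def psiS {N : ℕ} (k : ℕ) (A : Matrix (Fin N) (Fin N) ℂ)
    (w : Fin N → ℂ) (z : Fin N → ℂ) : ℂ :=
  Complex.exp (-(k : ℂ)) * Complex.exp ((k : ℂ) * quadForm A w / 2) *
    Complex.exp ((k : ℂ) * quadForm A z / 2) *
    Complex.exp ((k : ℂ) * (dotc z w - ∑ j, z j * (A.mulVec w) j))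

open Complex

theorem integral_exp_int_mul_I_mul (m : ℤ) :
    ∫ t in (0 : ℝ)..(2 * π), exp (I * m * t)
      = if m = 0 then ((2 * π : ℝ) : ℂ) else 0 := by
  split_ifs with hm
  · simp [hm]
  have hIm : I * m ≠ 0 := mul_ne_zero I_ne_zero (Int.cast_ne_zero.mpr hm)
  have hperiod : exp (I * m * (2 * π)) = 1 := by
    rw [← exp_int_mul_two_pi_mul_I m]
    ring_nf
  simpa [hperiod] using integral_exp_mul_complex (a := 0) (b := 2 * π) hIm

theorem fourierCoeff_eq_tsum_of_hasSum {ι : Type*} [Countable ι] {c : ι → ℂ}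
    (hc : Summable fun i => ‖c i‖) (n : ι → ℤ) {f : ℝ → ℂ}
    (hf : ∀ t : ℝ, HasSum (fun i => c i * exp (I * n i * t)) (f t)) (k : ℤ) :
    (1 / (2 * π)) * ∫ t in (0 : ℝ)..(2 * π), exp (-I * k * t) * f t
      = ∑' i, if n i = k then c i else 0 := by
  have hshift (t : ℝ) : HasSum (fun i => c i * exp (I * ↑(n i - k) * t))
      (exp (-I * k * t) * f t) := by
    refine ((hf t).mul_left (exp (-I * k * t))).congr_fun fun i => ?_
    rw [mul_left_comm, ← exp_add]
    push_cast
    ring_nf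
  have hnorm (i : ι) (t : ℝ) : ‖c i * exp (I * ↑(n i - k) * t)‖ = ‖c i‖ := by
    rw [norm_mul, norm_exp]
    simp
  have hint := intervalIntegral.hasSum_integral_of_dominated_convergence
    (μ := MeasureTheory.volume) (a := 0) (b := 2 * π) (fun i _ => ‖c i‖)
    (fun i => by fun_prop)
    (fun i => .of_forall fun t _ => (hnorm i t).le) (.of_forall fun _ _ => hc)
    intervalIntegrable_const (.of_forall fun t _ => hshift t)
  simp only [intervalIntegral.integral_const_mul, integral_exp_int_mul_I_mul, sub_eq_zero] at hint
  rw [← hint.tsum_eq, ← tsum_mul_left]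
  congr 1 with i
  split_ifs
  · push_cast; field_simp
  · simp

theorem summable_norm_pow_div_factorial_mul (x y : ℂ) :
    Summable fun p : ℕ × ℕ => ‖x ^ p.1 / p.1.factorial * (y ^ p.2 / p.2.factorial)‖ := by
  simp only [norm_mul, norm_div, norm_pow, norm_natCast]
  exact (Real.summable_pow_div_factorial _).mul_of_nonneg (Real.summable_pow_div_factorial _)
    (fun _ => by positivity) (fun _ => by positivity)

theorem hasSum_pow_div_factorial_mul (x y : ℂ) :
    HasSum (fun p : ℕ × ℕ => x ^ p.1 / p.1.factorial * (y ^ p.2 / p.2.factorial))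
      (exp x * exp y) := by
  have hexp (z : ℂ) : HasSum (fun m : ℕ => z ^ m / m.factorial) (exp z) := by
    rw [exp_eq_exp_ℂ]
    exact NormedSpace.expSeries_div_hasSum_exp z
  have hsum : Summable fun p : ℕ × ℕ => x ^ p.1 / p.1.factorial * (y ^ p.2 / p.2.factorial) :=
    (summable_norm_pow_div_factorial_mul x y).of_norm
  exact HasSum.mul (f := fun m : ℕ => x ^ m / m.factorial)
    (g := fun m : ℕ => y ^ m / m.factorial) (hexp x) (hexp y) hsum

theorem hasSum_exp_mul_exp_circle (u v : ℂ) (t : ℝ) :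
    HasSum (fun p : ℕ × ℕ => u ^ p.1 / p.1.factorial * (v ^ p.2 / p.2.factorial) *
        exp (I * ((2 * p.1 + p.2 : ℕ) : ℤ) * t))
      (exp (u * exp (I * t) ^ 2) * exp (v * exp (I * t))) := by
  refine (hasSum_pow_div_factorial_mul _ _).congr_fun fun p => ?_
  have hfreq : exp (I * ((2 * p.1 + p.2 : ℕ) : ℤ) * t) = exp (I * t) ^ (2 * p.1 + p.2) := by
    rw [← exp_nat_mul]
    push_cast
    ring_nf
  rw [hfreq]
  ring

section CoherentState

variable {N : ℕ}

theorem quadForm_const_mul (A : Matrix (Fin N) (Fin N) ℂ) (c : ℂ) (z : Fin N → ℂ) :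
    quadForm A (fun j => c * z j) = c ^ 2 * quadForm A z := by
  simp only [quadForm, Finset.mul_sum]
  exact Finset.sum_congr rfl fun i _ => Finset.sum_congr rfl fun j _ => by ring

theorem dotc_const_mul (c : ℂ) (z w : Fin N → ℂ) :
    dotc (fun j => c * z j) w = c * dotc z w := by
  simp only [dotc, Finset.mul_sum, mul_assoc]

theorem psiS_const_mul (k : ℕ) (A : Matrix (Fin N) (Fin N) ℂ) (w z : Fin N → ℂ) (c : ℂ) :
    psiS k A w (fun j => c * z j)
      = exp (-(k : ℂ)) * exp (k * quadForm A w / 2) *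
        (exp (k * (quadForm A z / 2) * c ^ 2) *
          exp (k * (dotc z w - ∑ j, z j * (A.mulVec w) j) * c)) := by
  simp only [psiS, quadForm_const_mul, dotc_const_mul, mul_assoc, ← Finset.mul_sum, ← mul_sub]
  ring_nf

end CoherentState

theorem tsum_ite_two_mul_add_eq {M : Type*} [AddCommMonoid M] [TopologicalSpace M] (k : ℕ)
    (g : ℕ × ℕ → M) :
    ∑' p : ℕ × ℕ, (if 2 * p.1 + p.2 = k then g p else 0)
      = ∑ ℓ ∈ Finset.filter (fun ℓ => k ≤ 2 * ℓ) (Finset.range (k + 1)),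
          g (k - ℓ, 2 * ℓ - k) := by
  have hsupp : ∀ p ∉ Finset.range (k + 1) ×ˢ Finset.range (k + 1),
      (if 2 * p.1 + p.2 = k then g p else 0) = 0 := by
    intro p hp
    simp only [Finset.mem_product, Finset.mem_range] at hp
    rw [if_neg (by omega)]
  rw [tsum_eq_sum hsupp, ← Finset.sum_filter]
  refine Finset.sum_nbij' (fun p => k - p.1) (fun ℓ => (k - ℓ, 2 * ℓ - k)) ?_ ?_ ?_ ?_ ?_ <;>
    simp only [Finset.mem_filter, Finset.mem_product, Finset.mem_range, Prod.forall,
      Prod.mk.injEq] <;> intros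
  all_goals first | omega | (congr 2 <;> omega)

theorem stmt4_general {N : ℕ} (k : ℕ) (A : Matrix (Fin N) (Fin N) ℂ)
    (w z : Fin N → ℂ) :
    (1 / (2 * π)) * ∫ t in (0 : ℝ)..(2 * π),
        Complex.exp (-Complex.I * k * t) *
          psiS k A w (fun j => Complex.exp (Complex.I * t) * z j)
      = Complex.exp (-(k : ℂ)) * Complex.exp ((k : ℂ) * quadForm A w / 2) *
        ∑ ℓ ∈ Finset.filter (fun ℓ => k ≤ 2 * ℓ) (Finset.range (k + 1)),
          ((k : ℂ) ^ ℓ / ((Nat.factorial (k - ℓ) : ℂ) * (Nat.factorial (2 * ℓ - k) : ℂ))) *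
            (quadForm A z / 2) ^ (k - ℓ) *
            (dotc z w - ∑ j, z j * (A.mulVec w) j) ^ (2 * ℓ - k) := by
  set Q := quadForm A z / 2
  set D := dotc z w - ∑ j, z j * (A.mulVec w) j
  set C := exp (-(k : ℂ)) * exp (k * quadForm A w / 2)
  set c : ℕ × ℕ → ℂ := fun p =>
    C * ((k * Q) ^ p.1 / p.1.factorial * ((k * D) ^ p.2 / p.2.factorial))
  have hseries (t : ℝ) :
      HasSum (fun p : ℕ × ℕ => c p * exp (I * ((2 * p.1 + p.2 : ℕ) : ℤ) * t))
        (psiS k A w (fun j => exp (I * t) * z j)) := by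
    rw [psiS_const_mul]
    exact ((hasSum_exp_mul_exp_circle (k * Q) (k * D) t).mul_left C).congr_fun fun p => by
      simp only [c, mul_assoc]
  have hc : Summable fun p => ‖c p‖ := by
    simpa only [c, norm_mul] using
      (summable_norm_pow_div_factorial_mul (k * Q) (k * D)).mul_left ‖C‖
  have hcoeff := fourierCoeff_eq_tsum_of_hasSum hc _ hseries k
  simp only [Int.cast_natCast, Nat.cast_inj] at hcoeff
  rw [hcoeff, tsum_ite_two_mul_add_eq, Finset.mul_sum]
  refine Finset.sum_congr rfl fun ℓ hℓ => ?_
  obtain ⟨hℓk, hkℓ⟩ : ℓ ≤ k ∧ k ≤ 2 * ℓ := by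
    simp only [Finset.mem_filter, Finset.mem_range] at hℓ
    omega
  have hpow : (k : ℂ) ^ ℓ = (k : ℂ) ^ (k - ℓ) * (k : ℂ) ^ (2 * ℓ - k) := by
    rw [← pow_add]; congr 1; omega
  simp only [c, hpow]
  rw [mul_pow, mul_pow, div_mul_div_comm]
  ring

/-- Exact expansion of the reduced state (Proposition 1.6): the `k`-th Fourier
coefficient of `t ↦ ψ_{A,w}(e^{it}z)` is the stated finite sum. -/
theorem stmt4 {N : ℕ} (k : ℕ) (hk : 0 < k) (A : Matrix (Fin N) (Fin N) ℂ)
    (hsym : A.IsSymm) (w z : Fin N → ℂ) (hw : nsq w = 1) (hz : nsq z = 1) :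
    (1 / (2 * π)) * ∫ t in (0 : ℝ)..(2 * π),
        Complex.exp (-Complex.I * k * t) *
          psiS k A w (fun j => Complex.exp (Complex.I * t) * z j)
      = Complex.exp (-(k : ℂ)) * Complex.exp ((k : ℂ) * quadForm A w / 2) *
        ∑ ℓ ∈ Finset.filter (fun ℓ => k ≤ 2 * ℓ) (Finset.range (k + 1)),
          ((k : ℂ) ^ ℓ / ((Nat.factorial (k - ℓ) : ℂ) * (Nat.factorial (2 * ℓ - k) : ℂ))) *
            (quadForm A z / 2) ^ (k - ℓ) *
            (dotc z w - ∑ j, z j * (A.mulVec w) j) ^ (2 * ℓ - k) :=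
  stmt4_general k A w z
end

section
/- Let A, B be complex symmetric N×N matrices with operator norms < 1, and v, w ∈ ℂ^N with v ≠ w. Then the real phase function φ(z, z̄) = Q_A(z−w)/2 + conj(Q_B(z−v))/2 + z w̄ᵀ + z̄ vᵀ − |v|²/2 − |w|²/2 − |z|² has no critical points on ℂ^N: the equations ∂φ/∂z = (z−w)A + w̄ − z̄ = 0 and the conjugate of ∂φ/∂z̄ = (z−v)B + v̄ − z̄ = 0 cannot hold simultaneously. -/
/-! Each critical-point equation says `u A = ū` for `u = z - w` (resp. `z - v`). For symmetric `A`
this gives `A u = ū`, hence `Aᴴ A u = u`, and invertibility of `1 - Aᴴ A` forces `u = 0`. So the two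
equations would give `z = w` and `z = v`. -/

open scoped BigOperators
open Matrix
open scoped ComplexOrder

/-- Componentwise complex conjugate of a vector. -/
noncomputable def conjVec {N : ℕ} (z : Fin N → ℂ) : Fin N → ℂ :=
  fun i => (starRingEnd ℂ) (z i)

namespace Matrix

variable {n K : Type*} [Fintype n] [DecidableEq n] [Field K] [PartialOrder K] [StarRing K]

theorem eq_zero_of_mulVec_eq_self_of_posDef_one_sub {M : Matrix n n K} (hM : (1 - M).PosDef)
    {u : n → K} (h : M *ᵥ u = u) : u = 0 :=
  mulVec_injective_of_isUnit hM.isUnit <| by rw [sub_mulVec, one_mulVec, h, sub_self, mulVec_zero]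

theorem eq_zero_of_vecMul_eq_star {A : Matrix n n K} (hAsym : A.IsSymm)
    (hA : (1 - Aᴴ * A).PosDef) {u : n → K} (h : u ᵥ* A = star u) : u = 0 := by
  have hAu : A *ᵥ u = star u := by rw [← h, ← mulVec_transpose, hAsym.eq]
  refine eq_zero_of_mulVec_eq_self_of_posDef_one_sub hA ?_
  rw [← mulVec_mulVec, hAu, ← star_vecMul, h, star_star]

end Matrix

theorem conjVec_eq_star {N : ℕ} (z : Fin N → ℂ) : conjVec z = star z := rfl

theorem vecMul_sub_eq_star_sub {N : ℕ} {A : Matrix (Fin N) (Fin N) ℂ} {z w : Fin N → ℂ}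
    (h : (z - w) ᵥ* A + conjVec w - conjVec z = 0) : (z - w) ᵥ* A = star (z - w) := by
  rw [star_sub, ← sub_eq_zero, ← h, conjVec_eq_star, conjVec_eq_star]
  abel

/-- Overlap phase has no critical points when the centers differ:
the equations `(z−w)A + w̄ − z̄ = 0` and `(z−v)B + v̄ − z̄ = 0` cannot hold
simultaneously for symmetric `A`, `B` of operator norm `< 1` and `v ≠ w`. -/
theorem stmt10 {N : ℕ} (A B : Matrix (Fin N) (Fin N) ℂ)
    (hAsym : A.IsSymm) (hBsym : B.IsSymm)
    (hA : (1 - Aᴴ * A).PosDef) (hB : (1 - Bᴴ * B).PosDef)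
    (v w : Fin N → ℂ) (hvw : v ≠ w) :
    ∀ z : Fin N → ℂ,
      ¬ (Matrix.vecMul (z - w) A + conjVec w - conjVec z = 0 ∧
         Matrix.vecMul (z - v) B + conjVec v - conjVec z = 0) := by
  rintro z ⟨hw, hv⟩
  have hzw := sub_eq_zero.mp (eq_zero_of_vecMul_eq_star hAsym hA (vecMul_sub_eq_star_sub hw))
  have hzv := sub_eq_zero.mp (eq_zero_of_vecMul_eq_star hBsym hB (vecMul_sub_eq_star_sub hv))
  exact hvw (hzv.symm.trans hzw)
end
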